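/- arXiv:1505.00326 — 6 statements merged into one kernel-verified Lean document; each statement's English description precedes it below -/
import Mathlib

section
/- There is a many-one reduction from the restricted UFD/ID[2] entailment problem to the entailment problem for constraint sets of unary functional dependencies and single-head frontier-one existential rules, and frontier-two inclusion dependencies: given a relation R with n positions, UFDs Φ, ID[2] rules Δ satisfying the restriction, and an ID[2] rule τ: R^a R^b ⊆ R^c R^d, construct a 2n-ary relation S with positions S^{i,1}, S^{i,2} for each position R^i, translate each UFD R^p → R^q of Φ to the UFDs S^{p,1} → S^{q,1} and S^{p,2} → S^{q,2} (yielding Φ'), translate τ to τ': S^{a,1} S^{b,1} ⊆ S^{c,1} S^{d,1}, and translate each ID[2] rule of Δ to two single-head frontier-one rules as in the construction (yielding Δ'); then Φ ∧ Δ ⊨ τ iff Φ' ∧ Δ' ⊨ τ'. -/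
/-- An interpretation of a single relation `R` with positions indexed by `P`. -/
structure RelInterp (P : Type) : Type 1 where
  Dom : Type
  rel : Set (P → Dom)

/-- Satisfaction of the unary functional dependency `R^p → R^q`. -/
def satUFD {P : Type} (I : RelInterp P) (φ : P × P) : Prop :=
  ∀ t ∈ I.rel, ∀ t' ∈ I.rel, t φ.1 = t' φ.1 → t φ.2 = t' φ.2

/-- Satisfaction of the frontier-two inclusion dependency `R^a R^b ⊆ R^c R^d`. -/
def satID2 {P : Type} (I : RelInterp P) (δ : P × P × P × P) : Prop :=
  ∀ t ∈ I.rel, ∃ u ∈ I.rel, u δ.2.2.1 = t δ.1 ∧ u δ.2.2.2 = t δ.2.1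

/-- Satisfaction of the first single-head frontier-one rule `δ₁` encoding the ID[2]
rule `δ : R^a R^b ⊆ R^c R^d`:
`∀x (S(x¹,x²) → ∃y S(z¹,z²))` with `z¹_a = x¹_a`, `z²_a = x¹_a`, `z²_b = y¹_b`
(and `z¹_b = y¹_b`), all other `zⁱ_j` fresh existential variables.
(Positions of `S` are pairs `(j, k)`: `S^{j,1}` is `(j, 0)`, `S^{j,2}` is `(j, 1)`.) -/
def satDelta1 {n : ℕ} (I : RelInterp (Fin n × Fin 2)) (δ : Fin n × Fin n × Fin n × Fin n) : Prop :=
  ∀ t ∈ I.rel, ∃ u ∈ I.rel,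
    u (δ.1, 0) = t (δ.1, 0) ∧ u (δ.1, 1) = t (δ.1, 0) ∧ u (δ.2.1, 1) = u (δ.2.1, 0)

/-- Satisfaction of the second single-head frontier-one rule `δ₂` encoding the ID[2]
rule `δ : R^a R^b ⊆ R^c R^d`:
`∀x (S(x¹,x²) → ∃y S(z¹,z²))` with `z²_a = x²_a`, `z¹_c = x²_a`, `z¹_d = y²_b`
(and `z²_b = y²_b`), all other `zⁱ_j` fresh existential variables. -/
def satDelta2 {n : ℕ} (I : RelInterp (Fin n × Fin 2)) (δ : Fin n × Fin n × Fin n × Fin n) : Prop :=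
  ∀ t ∈ I.rel, ∃ u ∈ I.rel,
    u (δ.1, 1) = t (δ.1, 1) ∧ u (δ.2.2.1, 0) = t (δ.1, 1) ∧ u (δ.2.2.2, 0) = u (δ.2.1, 1)

/-- the many-one reduction from the restricted UFD/ID[2] entailment
problem to entailment for UFDs plus single-head frontier-one existential rules,
and ID[2] rules: given a relation `R` with `n` positions, UFDs `Φ`, ID[2] rules `Δ`
satisfying the restriction (for each `R^a R^b ⊆ R^c R^d` in `Δ`, the UFD
`R^a → R^b` is in `Φ`), and an ID[2] rule `τ : R^a R^b ⊆ R^c R^d`, constructing the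
`2n`-ary relation `S`, translating each UFD to its two copies `Φ'`, translating
`τ` to `τ' : S^{a,1} S^{b,1} ⊆ S^{c,1} S^{d,1}`, and translating each rule of `Δ`
to the two single-head frontier-one rules `δ₁, δ₂` (yielding `Δ'`), we have
`Φ ∧ Δ ⊨ τ` iff `Φ' ∧ Δ' ⊨ τ'`. -/
theorem restricted_entailment_reduction (n : ℕ)
    (Φ : Set (Fin n × Fin n)) (Δ : Set (Fin n × Fin n × Fin n × Fin n))
    (hΦ : Φ.Finite) (hΔ : Δ.Finite)
    (hvalid : ∀ δ ∈ Δ, δ.1 ≠ δ.2.1 ∧ δ.2.2.1 ≠ δ.2.2.2)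
    (hrestr : ∀ δ ∈ Δ, (δ.1, δ.2.1) ∈ Φ)
    (a b c d : Fin n) (hab : a ≠ b) (hcd : c ≠ d) :
    (∀ I : RelInterp (Fin n),
        ((∀ φ ∈ Φ, satUFD I φ) ∧ (∀ δ ∈ Δ, satID2 I δ)) → satID2 I (a, b, c, d))
    ↔
    (∀ I' : RelInterp (Fin n × Fin 2),
        ((∀ φ ∈ Φ, ∀ k : Fin 2, satUFD I' ((φ.1, k), (φ.2, k))) ∧
         (∀ δ ∈ Δ, satDelta1 I' δ ∧ satDelta2 I' δ)) →
        satID2 I' ((a, 0), (b, 0), (c, 0), (d, 0))) := by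
  constructor
  · -- forward direction
    rintro h I' ⟨hU, hD⟩
    set I : RelInterp (Fin n) :=
      ⟨I'.Dom, {s | ∃ u ∈ I'.rel, s = fun j => u (j, 0)}⟩ with hIdef
    have hIU : ∀ φ ∈ Φ, satUFD I φ := by
      rintro φ hφ t ⟨u, hu, rfl⟩ t' ⟨u', hu', rfl⟩ heq
      exact hU φ hφ 0 u hu u' hu' heq
    have hID : ∀ δ ∈ Δ, satID2 I δ := by
      rintro δ hδ t ⟨u, hu, rfl⟩
      obtain ⟨u₁, hu₁, h1a, h1b, h1c⟩ := (hD δ hδ).1 u hu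
      obtain ⟨u₂, hu₂, h2a, h2b, h2c⟩ := (hD δ hδ).2 u₁ hu₁
      have hb0 : u₁ (δ.2.1, 0) = u (δ.2.1, 0) :=
        hU (δ.1, δ.2.1) (hrestr δ hδ) 0 u₁ hu₁ u hu h1a
      have hb1 : u₂ (δ.2.1, 1) = u₁ (δ.2.1, 1) :=
        hU (δ.1, δ.2.1) (hrestr δ hδ) 1 u₂ hu₂ u₁ hu₁ h2a
      refine ⟨fun j => u₂ (j, 0), ⟨u₂, hu₂, rfl⟩, ?_, ?_⟩
      · exact h2b.trans h1b
      · exact h2c.trans (hb1.trans (h1c.trans hb0))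
    have hτ := h I ⟨hIU, hID⟩
    intro t ht
    obtain ⟨v, ⟨w, hw, rfl⟩, hvc, hvd⟩ := hτ (fun j => t (j, 0)) ⟨t, ht, rfl⟩
    exact ⟨w, hw, hvc, hvd⟩
  · -- backward direction
    rintro h I ⟨hU, hD⟩
    set I' : RelInterp (Fin n × Fin 2) :=
      ⟨I.Dom, {s | ∀ k : Fin 2, (fun j => s (j, k)) ∈ I.rel}⟩ with hI'def
    have hU' : ∀ φ ∈ Φ, ∀ k : Fin 2, satUFD I' ((φ.1, k), (φ.2, k)) := by
      intro φ hφ k t ht t' ht' heq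
      exact hU φ hφ _ (ht k) _ (ht' k) heq
    have hD' : ∀ δ ∈ Δ, satDelta1 I' δ ∧ satDelta2 I' δ := by
      intro δ hδ
      constructor
      · intro t ht
        exact ⟨fun p => t (p.1, 0), fun _ => ht 0, rfl, rfl, rfl⟩
      · intro t ht
        obtain ⟨v, hv, hvc, hvd⟩ := hD δ hδ (fun j => t (j, 1)) (ht 1)
        refine ⟨fun p => if p.2 = 0 then v p.1 else t (p.1, 1), ?_, ?_, ?_, ?_⟩
        · intro k
          fin_cases k
          · simpa using hv
          · simpa using ht 1
        · simp
        · simpa using hvc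
        · simpa using hvd
    have hτ' := h I' ⟨hU', hD'⟩
    intro t ht
    obtain ⟨w, hw, hwc, hwd⟩ := hτ' (fun p => t p.1) (fun _ => ht)
    exact ⟨fun j => w (j, 0), hw 0, hwc, hwd⟩
end

section
/- Let σ be a signature, Σ a set of first-order constraints over σ, and τ: ∀x (φ(x) → ∃y ψ(x', y)) an existential rule over σ with x' ⊆ x. Introduce a fresh unary relation P_x for each variable x of x; let F be the fact φ(x) ∧ ⋀_{x ∈ x} P_x(x) and let q be the Boolean conjunctive query ∃x ∃y (φ(x) ∧ ψ(x', y) ∧ ⋀_{x ∈ x} P_x(x)). Then F ∧ Σ ⊨ q (every interpretation satisfying Σ and the existential closure of F satisfies q) iff Σ ⊨ τ (every interpretation satisfying Σ satisfies τ). Consequently, for any classes CL1 of constraints and CL2 of existential rules, the entailment problem for CL1 and CL2 reduces to the query answering problem for CL1. -/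
/-- A relational signature: relation names with arities. -/
structure Sig : Type 1 where
  Rel : Type
  ar : Rel → ℕ

/-- An interpretation of a signature: a domain and, for each relation,
a set of tuples (lists of the right length). -/
structure Interp (σ : Sig) : Type 1 where
  Dom : Type
  rel : σ.Rel → Set (List Dom)
  wf : ∀ R l, l ∈ rel R → l.length = σ.ar R

/-- An atom over variables `V`. -/
structure Atom (σ : Sig) (V : Type) where
  R : σ.Rel
  args : Fin (σ.ar R) → V

/-- A conjunction of atoms over variables `V`. -/
abbrev Conj (σ : Sig) (V : Type) := List (Atom σ V)

def Atom.vmap {σ : Sig} {V W : Type} (f : V → W) (A : Atom σ V) : Atom σ W :=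
  ⟨A.R, f ∘ A.args⟩

def Conj.vmap {σ : Sig} {V W : Type} (f : V → W) (Φ : Conj σ V) : Conj σ W :=
  Φ.map (Atom.vmap f)

def satAtom {σ : Sig} (I : Interp σ) {V : Type} (ν : V → I.Dom) (A : Atom σ V) : Prop :=
  (List.ofFn fun i => ν (A.args i)) ∈ I.rel A.R

def satConj {σ : Sig} (I : Interp σ) {V : Type} (ν : V → I.Dom) (Φ : Conj σ V) : Prop :=
  ∀ A ∈ Φ, satAtom I ν A

/-- A variable occurs in an atom. -/
def occursIn {σ : Sig} {V : Type} (v : V) (A : Atom σ V) : Prop := ∃ i, A.args i = v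

/-- The Gaifman graph of a conjunction of atoms. -/
def gaifmanC {σ : Sig} {V : Type} (Φ : Conj σ V) : SimpleGraph V where
  Adj u v := u ≠ v ∧ ∃ A ∈ Φ, occursIn u A ∧ occursIn v A
  symm := by
    constructor
    intro u v h
    exact ⟨h.1.symm, by obtain ⟨A, hA, h1, h2⟩ := h.2; exact ⟨A, hA, h2, h1⟩⟩
  loopless := by constructor; intro v h; exact h.1 rfl

/-- The Gaifman graph of an interpretation. -/
def gaifmanI {σ : Sig} (I : Interp σ) : SimpleGraph I.Dom where
  Adj a b := a ≠ b ∧ ∃ R l, l ∈ I.rel R ∧ a ∈ l ∧ b ∈ l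
  symm := by
    constructor
    intro a b h
    exact ⟨h.1.symm, by obtain ⟨R, l, hl, h1, h2⟩ := h.2; exact ⟨R, l, hl, h2, h1⟩⟩
  loopless := by constructor; intro a h; exact h.1 rfl

/-- The relation names of the shredded signature. -/
inductive SRel (σ : Sig) : Type
  | low (R : σ.Rel) (h : σ.ar R ≤ 2)
  | elt
  | tag (R : σ.Rel) (h : 2 < σ.ar R)
  | proj (R : σ.Rel) (h : 2 < σ.ar R) (i : Fin (σ.ar R))

/-- The shredded signature σs. -/
def sSig (σ : Sig) : Sig where
  Rel := SRel σ
  ar := fun r => match r with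
    | .low R _ => σ.ar R
    | .elt => 1
    | .tag _ _ => 1
    | .proj _ _ _ => 2

/-- Shredding of an atom (with the fresh tuple variable `t`). -/
def shredAtom {σ : Sig} {V T : Type} (A : Atom σ V) (t : T) : Conj (sSig σ) (V ⊕ T) :=
  if h : σ.ar A.R ≤ 2 then
    [⟨SRel.low A.R h, fun i => Sum.inl (A.args i)⟩]
  else
    ⟨SRel.tag A.R (lt_of_not_ge h), fun _ => Sum.inr t⟩ ::
    (List.finRange (σ.ar A.R)).map (fun i =>
      ⟨SRel.proj A.R (lt_of_not_ge h) i,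
       fun j => if j.val = 0 then Sum.inr t else Sum.inl (A.args i)⟩)

/-- Shredding of a conjunction of atoms: one fresh variable per atom. -/
def shredConj {σ : Sig} {V : Type} (Φ : Conj σ V) : Conj (sSig σ) (V ⊕ Fin Φ.length) :=
  (List.finRange Φ.length).flatMap (fun k => shredAtom (Φ.get k) k)

/-- The fresh elements of the shredding of an interpretation: one per higher-arity tuple. -/
def HighTuple {σ : Sig} (I : Interp σ) : Type :=
  Σ R : σ.Rel, {l : List I.Dom // l ∈ I.rel R ∧ 2 < σ.ar R}

/-- The shredding of an interpretation. -/
def shredInterp {σ : Sig} (I : Interp σ) : Interp (sSig σ) where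
  Dom := I.Dom ⊕ HighTuple I
  rel := fun r => match r with
    | .low R _ => {l | ∃ l₀ ∈ I.rel R, l = l₀.map Sum.inl}
    | .elt => {l | ∃ a : I.Dom, l = [Sum.inl a]}
    | .tag R _ => {l | ∃ t : HighTuple I, t.1 = R ∧ l = [Sum.inr t]}
    | .proj R _ i => {l | ∃ t : HighTuple I, t.1 = R ∧
        ∃ a : I.Dom, t.2.val[i.val]? = some a ∧ l = [Sum.inr t, Sum.inl a]}
  wf := by
    rintro r l hl
    cases r with
    | low R h => obtain ⟨l₀, h₀, rfl⟩ := hl; simpa [sSig] using I.wf R l₀ h₀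
    | elt => obtain ⟨a, rfl⟩ := hl; rfl
    | tag R h => obtain ⟨t, _, rfl⟩ := hl; rfl
    | proj R h i => obtain ⟨t, _, a, _, rfl⟩ := hl; rfl

/-- Homomorphisms of interpretations. -/
def IsHom {σ : Sig} (I I' : Interp σ) (h : I.Dom → I'.Dom) : Prop :=
  ∀ R l, l ∈ I.rel R → l.map h ∈ I'.rel R

/-- Existential rules: body over variables `B`, head over `B ⊕ E`
(`B`-variables occurring in the head are the frontier). -/
structure ExRule (σ : Sig) : Type 1 where
  B : Type
  E : Type
  body : Conj σ B
  head : Conj σ (B ⊕ E)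

def satRule {σ : Sig} (I : Interp σ) (τ : ExRule σ) : Prop :=
  ∀ ν : τ.B → I.Dom, satConj I ν τ.body →
    ∃ μ : τ.E → I.Dom, satConj I (Sum.elim ν μ) τ.head

/-- Shredding of an existential rule. -/
def shredRule {σ : Sig} (τ : ExRule σ) : ExRule (sSig σ) where
  B := τ.B ⊕ Fin τ.body.length
  E := τ.E ⊕ Fin τ.head.length
  body := shredConj τ.body
  head := (shredConj τ.head).vmap
    (Sum.elim (Sum.elim (Sum.inl ∘ Sum.inl) (Sum.inr ∘ Sum.inl)) (fun k => Sum.inr (Sum.inr k)))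

/-- The signature σ extended with `n` fresh unary relations `P_x`,
one per universally quantified variable of the rule. -/
def addP (σ : Sig) (n : ℕ) : Sig :=
  ⟨σ.Rel ⊕ Fin n, Sum.elim σ.ar (fun _ => 1)⟩

/-- The reduct of an interpretation of the extended signature to σ. -/
def reduct {σ : Sig} {n : ℕ} (I : Interp (addP σ n)) : Interp σ where
  Dom := I.Dom
  rel := fun R => I.rel (Sum.inl R)
  wf := fun R l hl => I.wf (Sum.inl R) l hl

/-- Reading a σ-atom over the extended signature. -/
def liftAtom {σ : Sig} {n : ℕ} {V : Type} (A : Atom σ V) : Atom (addP σ n) V :=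
  ⟨Sum.inl A.R, A.args⟩

/-! Satisfying the fact `F` in a model `I'` amounts to a match `ν` of the body in the reduct
together with `P_x(ν x)` for every `x`. Conversely, expanding a model `I` of `Σ` with a body
match `ν` by `P_x := {ν x}` yields a model of `F ∧ Σ` whose reduct is `I`; there the markers
force every match of `q` to agree with `ν` on the frontier, so it provides a head match
extending `ν`. -/

section Satisfaction

variable {σ : Sig} (I : Interp σ) {V W : Type}

theorem satConj_append (ν : V → I.Dom) (Φ Ψ : Conj σ V) :
    satConj I ν (Φ ++ Ψ) ↔ satConj I ν Φ ∧ satConj I ν Ψ := by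
  simp only [satConj, List.mem_append, or_imp, forall_and]

theorem satConj_vmap (ν : W → I.Dom) (f : V → W) (Φ : Conj σ V) :
    satConj I ν (Φ.vmap f) ↔ satConj I (ν ∘ f) Φ := by
  simp only [satConj, Conj.vmap, List.forall_mem_map]
  rfl

theorem satConj_ofFn {n : ℕ} (ν : V → I.Dom) (f : Fin n → Atom σ V) :
    satConj I ν (List.ofFn f) ↔ ∀ i, satAtom I ν (f i) := by
  simp only [satConj, List.forall_mem_ofFn_iff]

end Satisfaction

section Marking

variable {σ : Sig} {n : ℕ} {V : Type}

theorem satConj_map_liftAtom (I : Interp (addP σ n)) (ν : V → I.Dom) (Φ : Conj σ V) :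
    satConj I ν (Φ.map liftAtom) ↔ satConj (reduct I) ν Φ := by
  simp only [satConj, List.forall_mem_map]
  rfl

theorem satAtom_mark (I : Interp (addP σ n)) (ν : V → I.Dom) (x : Fin n) (v : V) :
    satAtom I ν (⟨Sum.inr x, fun _ => v⟩ : Atom (addP σ n) V) ↔ [ν v] ∈ I.rel (Sum.inr x) :=
  Iff.rfl

def markExpansion (I : Interp σ) (ν : Fin n → I.Dom) : Interp (addP σ n) where
  Dom := I.Dom
  rel := Sum.elim I.rel fun x => {[ν x]}
  wf := by
    rintro (R | x) l hl
    · exact I.wf R l hl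
    · rw [Set.mem_singleton_iff.mp hl]
      rfl

theorem mem_markExpansion_inr (I : Interp σ) (ν : Fin n → I.Dom) (x : Fin n) (a : I.Dom) :
    [a] ∈ (markExpansion I ν).rel (Sum.inr x) ↔ a = ν x :=
  List.singleton_inj

end Marking

/-- for a set `Cs` of constraints over σ and an existential rule
`τ : ∀x (body(x) → ∃y head(x', y))`, with `F` the fact
`body(x) ∧ ⋀_x P_x(x)` and `q` the Boolean CQ
`∃x∃y (body(x) ∧ head(x', y) ∧ ⋀_x P_x(x))` over the signature extended with the
fresh unary relations `P_x`, we have `F ∧ Cs ⊨ q` iff `Cs ⊨ τ`.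
(Consequently, entailment reduces to query answering.) -/
theorem entailment_reduces_to_QA (σ : Sig) {nb ne : ℕ}
    (body : Conj σ (Fin nb)) (head : Conj σ (Fin nb ⊕ Fin ne))
    (Cs : Set (Interp σ → Prop)) :
    (∀ I' : Interp (addP σ nb), (∀ c ∈ Cs, c (reduct I')) →
        (∃ ν : Fin nb → I'.Dom, satConj I' ν
          ((body.map liftAtom) ++
            List.ofFn (fun x : Fin nb => (⟨Sum.inr x, fun _ => x⟩ : Atom (addP σ nb) (Fin nb))))) →
        (∃ μ : Fin nb ⊕ Fin ne → I'.Dom, satConj I' μ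
          ((Conj.vmap Sum.inl (body.map liftAtom)) ++ (head.map liftAtom) ++
            List.ofFn (fun x : Fin nb =>
              (⟨Sum.inr x, fun _ => Sum.inl x⟩ : Atom (addP σ nb) (Fin nb ⊕ Fin ne))))))
    ↔
    (∀ I : Interp σ, (∀ c ∈ Cs, c I) →
      ∀ ν : Fin nb → I.Dom, satConj I ν body →
        ∃ μ : Fin ne → I.Dom, satConj I (Sum.elim ν μ) head) := by
  simp only [satConj_append, satConj_vmap, satConj_map_liftAtom, satConj_ofFn, satAtom_mark]
  constructor
  · intro hQA I hCs ν hbody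
    obtain ⟨μ, ⟨-, hhead⟩, hmark⟩ := hQA (markExpansion I ν) hCs
      ⟨ν, hbody, fun x => (mem_markExpansion_inr I ν x _).mpr rfl⟩
    have hfrontier : μ ∘ Sum.inl = ν :=
      funext fun x => (mem_markExpansion_inr I ν x _).mp (hmark x)
    refine ⟨μ ∘ Sum.inr, ?_⟩
    rw [← hfrontier]
    exact (Sum.elim_comp_inl_inr μ).symm ▸ hhead
  · rintro hτ I' hCs ⟨ν, hbody, hmark⟩
    obtain ⟨μ, hhead⟩ := hτ (reduct I') hCs ν hbody
    exact ⟨Sum.elim ν μ, ⟨hbody, hhead⟩, hmark⟩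
end

section
/- Let Σ be a finite set of unary functional dependencies and ID[2] inclusion dependencies, and τ an ID[2] inclusion dependency. For each UFD φ: R^p → R^q of Σ, introduce a fresh binary relation R_φ, the ID[2] rule τ_φ: ∀x (R(x) → R_φ(x_p, x_q)), and the functionality assertion Funct(R_φ); let Σ' consist of the ID[2] rules of Σ together with all the rules τ_φ and assertions Funct(R_φ). Then Σ ⊨ τ iff Σ' ⊨ τ. Consequently, the entailment problem for UFD ∧ ID[2] and ID[2] reduces to the entailment problem for D ∧ ID[2] and ID[2], for any description logic D that can express functionality assertions on binary relations. -/
/-- A relational signature, with a type of positions for each relation. -/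
structure PSig : Type 1 where
  Rel : Type
  Pos : Rel → Type

/-- An interpretation: tuples are functions from positions to the domain. -/
structure PInterp (σ : PSig) : Type 1 where
  Dom : Type
  rel : ∀ R : σ.Rel, Set (σ.Pos R → Dom)

/-- A unary functional dependency `R^p → R^q`. -/
structure PUFD (σ : PSig) where
  R : σ.Rel
  p : σ.Pos R
  q : σ.Pos R

def satPUFD {σ : PSig} (I : PInterp σ) (φ : PUFD σ) : Prop :=
  ∀ t ∈ I.rel φ.R, ∀ t' ∈ I.rel φ.R, t φ.p = t' φ.p → t φ.q = t' φ.q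

/-- A frontier-two inclusion dependency `R^a R^b ⊆ S^c S^d` (with `a ≠ b`, `c ≠ d`,
so no position is repeated in the body atom or in the head atom). -/
structure PID2 (σ : PSig) where
  R : σ.Rel
  S : σ.Rel
  a : σ.Pos R
  b : σ.Pos R
  c : σ.Pos S
  d : σ.Pos S
  hab : a ≠ b
  hcd : c ≠ d

def satPID2 {σ : PSig} (I : PInterp σ) (δ : PID2 σ) : Prop :=
  ∀ t ∈ I.rel δ.R, ∃ u ∈ I.rel δ.S, u δ.c = t δ.a ∧ u δ.d = t δ.b

/-- The signature σ extended with one fresh binary relation `R_φ` per UFD `φ ∈ Φ`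
(its two positions are `false` and `true`). -/
def addFn (σ : PSig) (Φ : Set (PUFD σ)) : PSig :=
  ⟨σ.Rel ⊕ {φ : PUFD σ // φ ∈ Φ}, Sum.elim σ.Pos (fun _ => Bool)⟩

/-- Reading an ID[2] rule of σ over the extended signature. -/
def liftID2 {σ : PSig} (Φ : Set (PUFD σ)) (δ : PID2 σ) : PID2 (addFn σ Φ) :=
  ⟨Sum.inl δ.R, Sum.inl δ.S, δ.a, δ.b, δ.c, δ.d, δ.hab, δ.hcd⟩

/-- The ID[2] rule `τ_φ : ∀x (R(x) → R_φ(x_p, x_q))` for a UFD `φ : R^p → R^q`. -/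
def satRulePhi {σ : PSig} {Φ : Set (PUFD σ)} (I : PInterp (addFn σ Φ))
    (φ : {φ : PUFD σ // φ ∈ Φ}) : Prop :=
  ∀ t ∈ I.rel (Sum.inl φ.val.R), ∃ u ∈ I.rel (Sum.inr φ),
    u false = t φ.val.p ∧ u true = t φ.val.q

/-- The functionality assertion `Funct(R_φ)` on the fresh binary relation. -/
def satFunctPhi {σ : PSig} {Φ : Set (PUFD σ)} (I : PInterp (addFn σ Φ))
    (φ : {φ : PUFD σ // φ ∈ Φ}) : Prop :=
  ∀ u ∈ I.rel (Sum.inr φ), ∀ u' ∈ I.rel (Sum.inr φ),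
    u false = u' false → u true = u' true

/-- replacing each UFD `φ : R^p → R^q` of `Σ = Φ ∪ Δ` by a fresh
binary relation `R_φ`, the ID[2] rule `τ_φ : ∀x (R(x) → R_φ(x_p, x_q))` and the
functionality assertion `Funct(R_φ)` yields a set `Σ'` with `Σ ⊨ τ` iff `Σ' ⊨ τ`.
(Consequently, entailment for UFD ∧ ID[2] and ID[2] reduces to entailment for
D ∧ ID[2] and ID[2] for any description logic D expressing functionality of
binary relations.) -/
theorem ufd_to_functionality (σ : PSig) (Φ : Set (PUFD σ)) (Δ : Set (PID2 σ))
    (hΦ : Φ.Finite) (hΔ : Δ.Finite) (τ : PID2 σ) :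
    (∀ I : PInterp σ,
        ((∀ φ ∈ Φ, satPUFD I φ) ∧ (∀ δ ∈ Δ, satPID2 I δ)) → satPID2 I τ)
    ↔
    (∀ I' : PInterp (addFn σ Φ),
        ((∀ δ ∈ Δ, satPID2 I' (liftID2 Φ δ)) ∧
         (∀ φ : {φ : PUFD σ // φ ∈ Φ}, satRulePhi I' φ ∧ satFunctPhi I' φ)) →
        satPID2 I' (liftID2 Φ τ)) := by
  constructor
  · -- Σ ⊨ τ  →  Σ' ⊨ τ : restrict I' to σ
    intro h I' ⟨hΔ', hΦ'⟩
    let I : PInterp σ := ⟨I'.Dom, fun R => I'.rel (Sum.inl R)⟩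
    have hτ : satPID2 I τ := by
      apply h
      refine ⟨?_, ?_⟩
      · intro φ hφ t ht t' ht' hpp
        obtain ⟨u, hu, hu0, hu1⟩ := (hΦ' ⟨φ, hφ⟩).1 t ht
        obtain ⟨u', hu', hu0', hu1'⟩ := (hΦ' ⟨φ, hφ⟩).1 t' ht'
        have := (hΦ' ⟨φ, hφ⟩).2 u hu u' hu' (by rw [hu0, hu0']; exact hpp)
        rw [← hu1, ← hu1', this]
      · intro δ hδ
        exact hΔ' δ hδ
    exact hτ
  · -- Σ' ⊨ τ  →  Σ ⊨ τ : extend I with the graphs of the UFDs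
    intro h I ⟨hΦsat, hΔsat⟩
    let I' : PInterp (addFn σ Φ) :=
      ⟨I.Dom, fun R =>
        match R with
        | Sum.inl R => I.rel R
        | Sum.inr φ => {u : Bool → I.Dom |
            ∃ t ∈ I.rel φ.val.R, u false = t φ.val.p ∧ u true = t φ.val.q}⟩
    have hτ' : satPID2 I' (liftID2 Φ τ) := by
      apply h
      refine ⟨fun δ hδ => hΔsat δ hδ, fun φ => ⟨?_, ?_⟩⟩
      · intro t ht
        exact ⟨fun b => cond b (t φ.val.q) (t φ.val.p),
          ⟨t, ht, rfl, rfl⟩, rfl, rfl⟩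
      · rintro u ⟨t, ht, hu0, hu1⟩ u' ⟨t', ht', hu0', hu1'⟩ huu
        have : t φ.val.q = t' φ.val.q :=
          hΦsat φ.val φ.prop t ht t' ht' (by rw [← hu0, ← hu0', huu])
        rw [hu1, hu1', this]
    exact hτ'
end

section
/- For any two σ-interpretations I and I', every homomorphism from I to I' can be extended to a homomorphism from SHR(I) to SHR(I'); conversely, the restriction to dom(I) of any homomorphism from SHR(I) to SHR(I') is a homomorphism from I to I'. -/
/-! A homomorphism `h` extends by sending the fresh element of a tuple `l` to the fresh element
of `h(l)`. Conversely, for a homomorphism `H` of the shreddings, the atoms `Elt(a)` force `H` to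
map `dom(I)` into `dom(I')`, the atom `A_R(t)` of the fresh element `t` of an `R`-tuple `l` forces
`H(t)` to be the fresh element of some `R`-tuple `l'` of `I'`, and the atoms `R_i(t, lᵢ)` force
`l' = H(l)` coordinatewise. -/

namespace IsHom

variable {σ : Sig} {I I' : Interp σ}

def mapHighTuple {h : I.Dom → I'.Dom} (hh : IsHom I I' h) (t : HighTuple I) : HighTuple I' :=
  ⟨t.1, t.2.val.map h, hh t.1 t.2.val t.2.2.1, t.2.2.2⟩

def shred {h : I.Dom → I'.Dom} (hh : IsHom I I' h) :
    (shredInterp I).Dom → (shredInterp I').Dom :=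
  Sum.elim (Sum.inl ∘ h) (Sum.inr ∘ hh.mapHighTuple)

theorem shred_inl {h : I.Dom → I'.Dom} (hh : IsHom I I' h) (a : I.Dom) :
    hh.shred (Sum.inl a) = Sum.inl (h a) :=
  rfl

theorem isHom_shred {h : I.Dom → I'.Dom} (hh : IsHom I I' h) :
    IsHom (shredInterp I) (shredInterp I') hh.shred := by
  rintro (R | _ | R | R) l hl
  · obtain ⟨l₀, hl₀, rfl⟩ := hl
    exact ⟨l₀.map h, hh R l₀ hl₀,
      (List.map_map ..).trans (List.map_map (f := h) (g := Sum.inl) (l := l₀)).symm⟩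
  · obtain ⟨a, rfl⟩ := hl
    exact ⟨h a, rfl⟩
  · obtain ⟨t, htR, rfl⟩ := hl
    exact ⟨hh.mapHighTuple t, htR, rfl⟩
  · obtain ⟨t, htR, a, hta, rfl⟩ := hl
    refine ⟨hh.mapHighTuple t, htR, h a, ?_, rfl⟩
    simp [mapHighTuple, hta]

variable {H : (shredInterp I).Dom → (shredInterp I').Dom}
  (HH : IsHom (shredInterp I) (shredInterp I') H)
include HH

theorem exists_shred_inl (a : I.Dom) : ∃ a' : I'.Dom, H (Sum.inl a) = Sum.inl a' := by
  obtain ⟨a', ha'⟩ := HH .elt [Sum.inl a] ⟨a, rfl⟩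
  exact ⟨a', List.singleton_inj.mp ha'⟩

theorem exists_shred_inr (t : HighTuple I) :
    ∃ l' : List I'.Dom, ∃ hl' : l' ∈ I'.rel t.1,
      H (Sum.inr t) = Sum.inr ⟨t.1, l', hl', t.2.2.2⟩ := by
  obtain ⟨⟨R', l', hl', hR'⟩, rfl, heq⟩ := HH (.tag t.1 t.2.2.2) [Sum.inr t] ⟨t, rfl, rfl⟩
  exact ⟨l', hl', List.singleton_inj.mp heq⟩

variable {h : I.Dom → I'.Dom} (hH : ∀ a, H (Sum.inl a) = Sum.inl (h a))
include hH

theorem shred_inr_eq_map {t : HighTuple I} {l' : List I'.Dom} {hl' : l' ∈ I'.rel t.1}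
    (ht : H (Sum.inr t) = Sum.inr ⟨t.1, l', hl', t.2.2.2⟩) : l' = t.2.val.map h := by
  have hlen : l'.length = t.2.val.length := (I'.wf _ _ hl').trans (I.wf _ _ t.2.2.1).symm
  refine List.ext_getElem (by simp [hlen]) fun n hn' _ => ?_
  obtain ⟨t'', -, a', ha', heq⟩ :=
    HH (.proj t.1 t.2.2.2 ⟨n, I'.wf _ _ hl' ▸ hn'⟩) [Sum.inr t, Sum.inl t.2.val[n]]
      ⟨t, rfl, _, List.getElem?_eq_getElem _, rfl⟩
  replace heq : [H (Sum.inr t), H (Sum.inl t.2.val[n])] = [Sum.inr t'', Sum.inl a'] := heq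
  rw [ht, hH] at heq
  obtain ⟨ht'', heq⟩ := List.cons_eq_cons.mp heq
  rw [← Sum.inr_injective ht'', ← Sum.inl_injective (List.cons_eq_cons.mp heq).1] at ha'
  simpa [List.getElem?_eq_getElem hn'] using ha'

theorem of_shred : IsHom I I' h := by
  intro R l hl
  by_cases har : σ.ar R ≤ 2
  · obtain ⟨l₀, hl₀, heq⟩ := HH (.low R har) (l.map Sum.inl) ⟨l, hl, rfl⟩
    have hmap : (l.map Sum.inl).map H = (l.map h).map Sum.inl :=
      (List.map_map ..).trans ((List.map_congr_left fun a _ => hH a).trans (List.map_map ..).symm)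
    have : l.map h = l₀ := List.map_injective_iff.mpr Sum.inl_injective (hmap ▸ heq)
    exact this ▸ hl₀
  · obtain ⟨l', hl', ht⟩ := exists_shred_inr HH ⟨R, l, hl, lt_of_not_ge har⟩
    exact shred_inr_eq_map HH hH (hl' := hl') ht ▸ hl'

end IsHom

/-- every homomorphism from `I` to `I'` extends to a homomorphism
from `SHR(I)` to `SHR(I')`, and conversely every homomorphism from `SHR(I)` to
`SHR(I')` restricts (on `dom(I)`) to a homomorphism from `I` to `I'`. -/
theorem shredding_homomorphisms (σ : Sig) (I I' : Interp σ) :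
    (∀ h : I.Dom → I'.Dom, IsHom I I' h →
      ∃ H : (shredInterp I).Dom → (shredInterp I').Dom,
        IsHom (shredInterp I) (shredInterp I') H ∧
        ∀ a : I.Dom, H (Sum.inl a) = Sum.inl (h a)) ∧
    (∀ H : (shredInterp I).Dom → (shredInterp I').Dom,
      IsHom (shredInterp I) (shredInterp I') H →
      ∃ h : I.Dom → I'.Dom, IsHom I I' h ∧
        ∀ a : I.Dom, H (Sum.inl a) = Sum.inl (h a)) := by
  refine ⟨fun h hh => ⟨hh.shred, hh.isHom_shred, hh.shred_inl⟩, fun H HH => ?_⟩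
  choose h hH using IsHom.exists_shred_inl HH
  exact ⟨h, IsHom.of_shred HH hH, hH⟩
end

section
/- The shredding operation SHR is a bijection from the class of σ-interpretations to the class of redundancy-free σs-interpretations satisfying Wellformed(σs), whose inverse is the unshredding operation. -/
/-- The `Elt`-elements of a σs-interpretation. -/
def EltDom {σ : Sig} (J : Interp (sSig σ)) : Type :=
  {a : J.Dom // [a] ∈ J.rel SRel.elt}

/-- The unshredding of a σs-interpretation. -/
def unshred {σ : Sig} (J : Interp (sSig σ)) : Interp σ where
  Dom := EltDom J
  rel := fun R =>
    if h : σ.ar R ≤ 2 then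
      {l | l.length = σ.ar R ∧ l.map Subtype.val ∈ J.rel (SRel.low R h)}
    else
      {l | ∃ hl : l.length = σ.ar R, ∃ t : J.Dom,
        [t] ∈ J.rel (SRel.tag R (lt_of_not_ge h)) ∧
        ∀ i : Fin (σ.ar R),
          [t, (l.get (Fin.cast hl.symm i)).val] ∈ J.rel (SRel.proj R (lt_of_not_ge h) i)}
  wf := by
    intro R l hl
    by_cases h : σ.ar R ≤ 2
    · rw [dif_pos h] at hl; exact hl.1
    · rw [dif_neg h] at hl; exact hl.1

/-- The structural conditions satisfied by shreddings (`Wellformed(σs)`). -/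
def WellFormed {σ : Sig} (J : Interp (sSig σ)) : Prop :=
  (∀ (R : σ.Rel) (h : 2 < σ.ar R) (a : J.Dom),
      [a] ∈ J.rel (SRel.tag R h) → [a] ∉ J.rel SRel.elt) ∧
  (∀ (R : σ.Rel) (h : 2 < σ.ar R) (R' : σ.Rel) (h' : 2 < σ.ar R') (a : J.Dom),
      [a] ∈ J.rel (SRel.tag R h) → [a] ∈ J.rel (SRel.tag R' h') → R = R') ∧
  (∀ a : J.Dom, [a] ∈ J.rel SRel.elt ∨ ∃ (R : σ.Rel) (h : 2 < σ.ar R), [a] ∈ J.rel (SRel.tag R h)) ∧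
  (∀ (R : σ.Rel) (h : 2 < σ.ar R) (i : Fin (σ.ar R)) (t a : J.Dom),
      [t, a] ∈ J.rel (SRel.proj R h i) →
        [t] ∈ J.rel (SRel.tag R h) ∧ [a] ∈ J.rel SRel.elt) ∧
  (∀ (R : σ.Rel) (h : 2 < σ.ar R) (t : J.Dom), [t] ∈ J.rel (SRel.tag R h) →
      ∀ i : Fin (σ.ar R), ∃! a : J.Dom, [t, a] ∈ J.rel (SRel.proj R h i)) ∧
  (∀ (R : σ.Rel) (h : σ.ar R ≤ 2) (l : List J.Dom), l ∈ J.rel (SRel.low R h) →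
      ∀ a ∈ l, [a] ∈ J.rel SRel.elt)

/-- Redundancy-freeness: no two distinct tuple-elements code the same tuple. -/
def RedundancyFree {σ : Sig} (J : Interp (sSig σ)) : Prop :=
  ∀ (R : σ.Rel) (h : 2 < σ.ar R) (t t' : J.Dom) (f : Fin (σ.ar R) → J.Dom),
    (∀ i, [t, f i] ∈ J.rel (SRel.proj R h i) ∧ [t', f i] ∈ J.rel (SRel.proj R h i)) → t = t'

/-- Isomorphism of interpretations. -/
structure InterpIso {σ : Sig} (I I' : Interp σ) where
  e : I.Dom ≃ I'.Dom
  hrel : ∀ R l, l ∈ I.rel R ↔ l.map e ∈ I'.rel R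

/-- GC²: the guarded two-variable fragment with counting quantifiers
(atoms have arity ≤ 2; guards of counting quantifiers use both variables). -/
inductive GC2 (σ : Sig) : Type
  | atom (R : σ.Rel) (har : σ.ar R ≤ 2) (args : Fin (σ.ar R) → Fin 2)
  | eq (v w : Fin 2)
  | neg (φ : GC2 σ)
  | conj (φ ψ : GC2 σ)
  | count (v : Fin 2) (n : ℕ) (R : σ.Rel) (har : σ.ar R ≤ 2)
      (gargs : Fin (σ.ar R) → Fin 2) (hg : ∀ w : Fin 2, ∃ i, gargs i = w)
      (φ : GC2 σ)

def GC2.eval {σ : Sig} (I : Interp σ) : GC2 σ → (Fin 2 → I.Dom) → Prop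
  | .atom R _ args, ν => (List.ofFn fun i => ν (args i)) ∈ I.rel R
  | .eq v w, ν => ν v = ν w
  | .neg φ, ν => ¬ φ.eval I ν
  | .conj φ ψ, ν => φ.eval I ν ∧ ψ.eval I ν
  | .count v n R _ gargs _ φ, ν =>
      ∃ s : Finset I.Dom, n ≤ s.card ∧ ∀ b ∈ s,
        ((List.ofFn fun i => Function.update ν v b (gargs i)) ∈ I.rel R) ∧
        φ.eval I (Function.update ν v b)

def GC2.size {σ : Sig} : GC2 σ → ℕ
  | .atom _ _ _ => 1
  | .eq _ _ => 1
  | .neg φ => φ.size + 1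
  | .conj φ ψ => φ.size + ψ.size + 1
  | .count _ _ _ _ _ _ φ => φ.size + 1

/-- A GC² theory holds in an interpretation (formulas read universally closed). -/
def satTheory {σ : Sig} (I : Interp σ) (Θ : Set (GC2 σ)) : Prop :=
  ∀ φ ∈ Θ, ∀ ν : Fin 2 → I.Dom, φ.eval I ν

/-! The `Elt`-part of `SHR(I)` is a copy of `I`, and each fresh element of `SHR(I)` has the entries
of its tuple as `R_i`-successors, so unshredding reads `I` back. Conversely, each tuple of
`unshred J` is coded by some witness element of `J`. In a well-formed `J` every `R_i` is a total
function on `A_R`-elements, so a witness determines its tuple, and redundancy-freeness makes every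
`A_R`-element the witness of the tuple it codes. Hence sending `Elt`-elements to themselves and
tuples to their witnesses identifies `SHR(unshred J)` with `J`. -/

section Shred
variable {σ : Sig}

lemma List.ext_getElem?_fin {α : Type*} {l l' : List α} {n : ℕ} (hl : l.length = n)
    (hl' : l'.length = n) (h : ∀ i : Fin n, l[i.val]? = l'[i.val]?) : l = l' := by
  refine List.ext_getElem? fun i => ?_
  by_cases hi : i < n
  · exact h ⟨i, hi⟩
  · simp [*]

lemma List.exists_eq_map_inl {α β : Type*} {l : List (α ⊕ β)} (h : ∀ x ∈ l, ∃ a, x = .inl a) :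
    ∃ l₀ : List α, l = l₀.map .inl := by
  induction l with
  | nil => exact ⟨[], rfl⟩
  | cons x l ih =>
    obtain ⟨a, rfl⟩ := h x List.mem_cons_self
    obtain ⟨l₀, rfl⟩ := ih fun y hy => h y (List.mem_cons_of_mem _ hy)
    exact ⟨a :: l₀, rfl⟩

namespace InterpIso

def symm {I I' : Interp σ} (φ : InterpIso I I') : InterpIso I' I where
  e := φ.e.symm
  hrel R l := by rw [φ.hrel, List.map_map, φ.e.self_comp_symm, List.map_id]

def ofLengthEq {I I' : Interp σ} (e : I.Dom ≃ I'.Dom)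
    (h : ∀ R l, l.length = σ.ar R → (l ∈ I.rel R ↔ l.map e ∈ I'.rel R)) : InterpIso I I' where
  e := e
  hrel R l := ⟨fun hl => (h R l (I.wf R l hl)).mp hl,
    fun hl => (h R l (by simpa using I'.wf R _ hl)).mpr hl⟩

end InterpIso

namespace HighTuple
variable {I : Interp σ}

lemma length_eq (t : HighTuple I) : t.2.val.length = σ.ar t.1 :=
  I.wf _ _ t.2.2.1

lemma exists_getElem?_eq (t : HighTuple I) (i : Fin (σ.ar t.1)) : ∃ a, t.2.val[i.val]? = some a :=
  ⟨_, List.getElem?_eq_getElem (i.2.trans_eq t.length_eq.symm)⟩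

lemma ext {t t' : HighTuple I} (h₁ : t.1 = t'.1) (h₂ : t.2.val = t'.2.val) : t = t' := by
  obtain ⟨R, l⟩ := t
  obtain ⟨R', l'⟩ := t'
  subst h₁
  exact congrArg _ (Subtype.ext h₂)

end HighTuple

section shredInterp
variable {I : Interp σ}

lemma mem_shredInterp_low {R : σ.Rel} {h : σ.ar R ≤ 2} {l : List (shredInterp I).Dom} :
    l ∈ (shredInterp I).rel (.low R h) ↔ ∃ l₀ ∈ I.rel R, l = l₀.map Sum.inl :=
  Iff.rfl

lemma map_inl_mem_shredInterp_low {R : σ.Rel} {h : σ.ar R ≤ 2} {l : List I.Dom} :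
    (l.map Sum.inl : List (shredInterp I).Dom) ∈ (shredInterp I).rel (.low R h) ↔ l ∈ I.rel R :=
  ⟨fun ⟨_, hl₀, hl⟩ => List.map_injective_iff.mpr Sum.inl_injective hl ▸ hl₀,
    fun hl => ⟨l, hl, rfl⟩⟩

lemma singleton_mem_shredInterp_elt {x : (shredInterp I).Dom} :
    [x] ∈ (shredInterp I).rel .elt ↔ ∃ a, x = .inl a :=
  ⟨fun ⟨a, ha⟩ => ⟨a, List.singleton_injective ha⟩, fun ⟨a, ha⟩ => ⟨a, ha ▸ rfl⟩⟩

lemma singleton_mem_shredInterp_tag {R : σ.Rel} {h : 2 < σ.ar R} {x : (shredInterp I).Dom} :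
    [x] ∈ (shredInterp I).rel (.tag R h) ↔ ∃ t : HighTuple I, t.1 = R ∧ x = .inr t :=
  ⟨fun ⟨t, ht, hx⟩ => ⟨t, ht, List.singleton_injective hx⟩,
    fun ⟨t, ht, hx⟩ => ⟨t, ht, hx ▸ rfl⟩⟩

lemma pair_mem_shredInterp_proj {R : σ.Rel} {h : 2 < σ.ar R} {i : Fin (σ.ar R)}
    {x y : (shredInterp I).Dom} :
    [x, y] ∈ (shredInterp I).rel (.proj R h i) ↔
      ∃ t : HighTuple I, t.1 = R ∧ x = .inr t ∧ ∃ a, t.2.val[i.val]? = some a ∧ y = .inl a := by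
  refine ⟨fun ⟨t, ht, a, ha, hxy⟩ => ?_,
    fun ⟨t, ht, hx, a, ha, hy⟩ => ⟨t, ht, a, ha, hx ▸ hy ▸ rfl⟩⟩
  obtain ⟨rfl, hy⟩ := List.cons.inj hxy
  obtain rfl := List.singleton_injective hy
  exact ⟨t, ht, rfl, a, ha, rfl⟩

lemma wellFormed_shredInterp (I : Interp σ) : WellFormed (shredInterp I) := by
  refine ⟨?_, ?_, ?_, ?_, ?_, ?_⟩ <;>
    simp only [singleton_mem_shredInterp_elt, singleton_mem_shredInterp_tag,
      pair_mem_shredInterp_proj, mem_shredInterp_low]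
  · rintro R - - ⟨t, -, rfl⟩ ⟨a, ⟨⟩⟩
  · rintro R - R' - - ⟨t, rfl, rfl⟩ ⟨t', rfl, ⟨⟩⟩
    rfl
  · rintro (a | t)
    · exact .inl ⟨a, rfl⟩
    · exact .inr ⟨t.1, t.2.2.2, t, rfl, rfl⟩
  · rintro R - i - - ⟨t, rfl, rfl, a, -, rfl⟩
    exact ⟨⟨t, rfl, rfl⟩, a, rfl⟩
  · rintro R - - ⟨t, rfl, rfl⟩ i
    obtain ⟨a, ha⟩ := t.exists_getElem?_eq i
    refine ⟨.inl a, ⟨t, rfl, rfl, a, ha, rfl⟩, ?_⟩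
    rintro - ⟨t', -, ht', b, hb, rfl⟩
    cases ht'
    cases ha.symm.trans hb
    rfl
  · rintro R - - ⟨l₀, -, rfl⟩ x hx
    obtain ⟨a, -, rfl⟩ := List.mem_map.mp hx
    exact ⟨a, rfl⟩

lemma redundancyFree_shredInterp (I : Interp σ) : RedundancyFree (shredInterp I) := by
  intro R h t t' f hf
  simp only [pair_mem_shredInterp_proj] at hf
  -- any one coordinate already shows that `t` and `t'` are tuple-elements
  obtain ⟨⟨u, hu, rfl, -⟩, ⟨u', hu', rfl, -⟩⟩ := hf ⟨0, by omega⟩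
  refine congrArg _ (HighTuple.ext (hu.trans hu'.symm)
    (List.ext_getElem?_fin (u.length_eq.trans (congrArg σ.ar hu))
      (u'.length_eq.trans (congrArg σ.ar hu')) fun i => ?_))
  obtain ⟨⟨v, -, hv, a, ha, hfa⟩, ⟨v', -, hv', a', ha', hfa'⟩⟩ := hf i
  cases hv
  cases hv'
  cases hfa.symm.trans hfa'
  rw [ha, ha']

end shredInterp

section unshred
variable {J : Interp (sSig σ)}

lemma mem_unshred_of_le {R : σ.Rel} (h : σ.ar R ≤ 2) {l : List (EltDom J)} :
    l ∈ (unshred J).rel R ↔ l.length = σ.ar R ∧ l.map Subtype.val ∈ J.rel (.low R h) := by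
  simp only [unshred, dif_pos h]
  rfl

lemma mem_unshred_of_lt {R : σ.Rel} (h : 2 < σ.ar R) {l : List (EltDom J)} :
    l ∈ (unshred J).rel R ↔ l.length = σ.ar R ∧ ∃ t, [t] ∈ J.rel (.tag R h) ∧
      ∀ (i : Fin (σ.ar R)) (a : EltDom J), l[i.val]? = some a →
        [t, a.val] ∈ J.rel (.proj R h i) := by
  simp only [unshred, dif_neg h.not_ge]
  refine ⟨fun ⟨hl, t, ht, hp⟩ => ⟨hl, t, ht, fun i a ha => ?_⟩,
    fun ⟨hl, t, ht, hp⟩ => ⟨hl, t, ht, fun i => hp i _ (List.getElem?_eq_getElem _)⟩⟩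
  obtain ⟨-, rfl⟩ := List.getElem?_eq_some_iff.mp ha
  exact hp i

end unshred

def equivEltDomShredInterp (I : Interp σ) : I.Dom ≃ EltDom (shredInterp I) where
  toFun a := ⟨.inl a, singleton_mem_shredInterp_elt.mpr ⟨a, rfl⟩⟩
  invFun x := x.1.getLeft <| by
    obtain ⟨a, ha⟩ := singleton_mem_shredInterp_elt.mp x.2
    rw [ha]
    rfl
  left_inv _ := rfl
  right_inv := by
    rintro ⟨x, hx⟩
    obtain ⟨a, rfl⟩ := singleton_mem_shredInterp_elt.mp hx
    rfl

section unshredShred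
variable {I : Interp σ} {R : σ.Rel} {l : List I.Dom}

-- `rw [List.map_map]` fails here because `EltDom` is not reducible; this lemma (and
-- `map_fromShredUnshred_map_inl`) is the needed instance, proved by unification.
lemma map_val_map_equivEltDomShredInterp :
    (l.map (equivEltDomShredInterp I)).map Subtype.val = l.map Sum.inl :=
  List.map_map ..

lemma map_equivEltDomShredInterp_mem_unshred_of_le (h : σ.ar R ≤ 2) (hl : l.length = σ.ar R) :
    l.map (equivEltDomShredInterp I) ∈ (unshred (shredInterp I)).rel R ↔ l ∈ I.rel R := by
  rw [mem_unshred_of_le h, map_val_map_equivEltDomShredInterp, List.length_map, and_iff_right hl]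
  exact map_inl_mem_shredInterp_low

lemma map_equivEltDomShredInterp_mem_unshred_of_lt (h : 2 < σ.ar R) (hl : l.length = σ.ar R) :
    l.map (equivEltDomShredInterp I) ∈ (unshred (shredInterp I)).rel R ↔ l ∈ I.rel R := by
  rw [mem_unshred_of_lt h]
  simp only [singleton_mem_shredInterp_tag, pair_mem_shredInterp_proj, List.length_map]
  constructor
  · rintro ⟨-, -, ⟨t, rfl, rfl⟩, hproj⟩
    suffices t.2.val = l by rw [← this]; exact t.2.2.1
    refine List.ext_getElem?_fin t.length_eq hl fun i => ?_
    obtain ⟨b, hb⟩ : ∃ b, l[i.val]? = some b :=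
      ⟨_, List.getElem?_eq_getElem (i.2.trans_eq hl.symm)⟩
    obtain ⟨t', -, ht', c, hc, hbc⟩ := hproj i (equivEltDomShredInterp I b) (by simp [hb])
    cases ht'
    rw [hb, hc, Sum.inl_injective hbc]
  · intro hmem
    refine ⟨hl, _, ⟨⟨R, l, hmem, h⟩, rfl, rfl⟩, fun i a ha => ?_⟩
    rw [List.getElem?_map, Option.map_eq_some_iff] at ha
    obtain ⟨b, hb, rfl⟩ := ha
    exact ⟨_, rfl, rfl, b, hb, rfl⟩

end unshredShred

def interpIsoUnshredShredInterp (I : Interp σ) : InterpIso I (unshred (shredInterp I)) :=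
  .ofLengthEq (equivEltDomShredInterp I) fun R _ hl =>
    if h : σ.ar R ≤ 2 then (map_equivEltDomShredInterp_mem_unshred_of_le h hl).symm
    else (map_equivEltDomShredInterp_mem_unshred_of_lt (not_le.mp h) hl).symm

namespace WellFormed
variable {J : Interp (sSig σ)} (hJ : WellFormed J) {R : σ.Rel}
include hJ

lemma not_elt_of_tag {h : 2 < σ.ar R} {a : J.Dom} (ha : [a] ∈ J.rel (.tag R h)) :
    [a] ∉ J.rel .elt :=
  hJ.1 R h a ha

lemma eq_of_tag {R' : σ.Rel} {h : 2 < σ.ar R} {h' : 2 < σ.ar R'} {a : J.Dom}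
    (ha : [a] ∈ J.rel (.tag R h)) (ha' : [a] ∈ J.rel (.tag R' h')) : R = R' :=
  hJ.2.1 R h R' h' a ha ha'

lemma elt_or_tag (a : J.Dom) :
    [a] ∈ J.rel .elt ∨ ∃ (R : σ.Rel) (h : 2 < σ.ar R), [a] ∈ J.rel (.tag R h) :=
  hJ.2.2.1 a

lemma tag_of_proj {h : 2 < σ.ar R} {i : Fin (σ.ar R)} {t a : J.Dom}
    (ht : [t, a] ∈ J.rel (.proj R h i)) : [t] ∈ J.rel (.tag R h) :=
  (hJ.2.2.2.1 R h i t a ht).1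

lemma elt_of_proj {h : 2 < σ.ar R} {i : Fin (σ.ar R)} {t a : J.Dom}
    (ht : [t, a] ∈ J.rel (.proj R h i)) : [a] ∈ J.rel .elt :=
  (hJ.2.2.2.1 R h i t a ht).2

lemma exists_proj {h : 2 < σ.ar R} {t : J.Dom} (ht : [t] ∈ J.rel (.tag R h))
    (i : Fin (σ.ar R)) : ∃ a, [t, a] ∈ J.rel (.proj R h i) :=
  (hJ.2.2.2.2.1 R h t ht i).exists

lemma proj_functional {h : 2 < σ.ar R} {i : Fin (σ.ar R)} {t a b : J.Dom}
    (ha : [t, a] ∈ J.rel (.proj R h i)) (hb : [t, b] ∈ J.rel (.proj R h i)) : a = b :=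
  (hJ.2.2.2.2.1 R h t (hJ.tag_of_proj ha) i).unique ha hb

lemma elt_of_low {h : σ.ar R ≤ 2} {l : List J.Dom} (hl : l ∈ J.rel (.low R h)) {a : J.Dom}
    (ha : a ∈ l) : [a] ∈ J.rel .elt :=
  hJ.2.2.2.2.2 R h l hl a ha

end WellFormed

section shredUnshred
variable {J : Interp (sSig σ)}

namespace HighTuple

noncomputable def witness (t : HighTuple (unshred J)) : J.Dom :=
  ((mem_unshred_of_lt t.2.2.2).mp t.2.2.1).2.choose

lemma witness_tag (t : HighTuple (unshred J)) : [t.witness] ∈ J.rel (.tag t.1 t.2.2.2) :=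
  ((mem_unshred_of_lt t.2.2.2).mp t.2.2.1).2.choose_spec.1

lemma witness_proj (t : HighTuple (unshred J)) {i : Fin (σ.ar t.1)} {a : EltDom J}
    (ha : t.2.val[i.val]? = some a) : [t.witness, a.val] ∈ J.rel (.proj t.1 t.2.2.2 i) :=
  ((mem_unshred_of_lt t.2.2.2).mp t.2.2.1).2.choose_spec.2 i a ha

lemma witness_injective (hJ : WellFormed J) :
    Function.Injective (witness : HighTuple (unshred J) → J.Dom) := by
  rintro ⟨R, l, hl, h⟩ ⟨R', l', hl', h'⟩ heq
  have htag := witness_tag ⟨R, l, hl, h⟩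
  rw [heq] at htag
  obtain rfl : R = R' := hJ.eq_of_tag htag (witness_tag ⟨R', l', hl', h'⟩)
  refine HighTuple.ext rfl (List.ext_getElem?_fin (length_eq ⟨R, l, hl, h⟩)
    (length_eq ⟨R, l', hl', h'⟩) fun i => ?_)
  obtain ⟨a, ha⟩ := exists_getElem?_eq ⟨R, l, hl, h⟩ i
  obtain ⟨b, hb⟩ := exists_getElem?_eq ⟨R, l', hl', h'⟩ i
  have hab := hJ.proj_functional (witness_proj _ ha) (heq ▸ witness_proj _ hb)
  rw [ha, hb, Subtype.ext hab]

lemma exists_witness_eq (hJ : WellFormed J) (hrf : RedundancyFree J) {R : σ.Rel}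
    {h : 2 < σ.ar R} {s : J.Dom} (hs : [s] ∈ J.rel (.tag R h)) :
    ∃ t : HighTuple (unshred J), t.witness = s := by
  have hproj (i : Fin (σ.ar R)) : ∃ a : EltDom J, [s, a.val] ∈ J.rel (.proj R h i) :=
    have ⟨a, ha⟩ := hJ.exists_proj hs i
    ⟨⟨a, hJ.elt_of_proj ha⟩, ha⟩
  choose g hg using hproj
  have hmem : List.ofFn g ∈ (unshred J).rel R :=
    (mem_unshred_of_lt h).mpr ⟨List.length_ofFn, s, hs, fun i a ha => by
      obtain rfl : g i = a := by simpa using ha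
      exact hg i⟩
  let t : HighTuple (unshred J) := ⟨R, List.ofFn g, hmem, h⟩
  refine ⟨t, hrf R h _ _ (fun i => (g i).val) fun i => ⟨t.witness_proj ?_, hg i⟩⟩
  exact List.getElem?_ofFn.trans (dif_pos i.2)

end HighTuple

noncomputable def fromShredUnshred : (shredInterp (unshred J)).Dom → J.Dom :=
  Sum.elim Subtype.val HighTuple.witness

lemma map_fromShredUnshred_map_inl (l : List (EltDom J)) :
    (l.map Sum.inl : List (shredInterp (unshred J)).Dom).map fromShredUnshred = l.map Subtype.val :=
  List.map_map ..

variable (hJ : WellFormed J)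
include hJ

lemma singleton_fromShredUnshred_mem_elt {x : (shredInterp (unshred J)).Dom} :
    [fromShredUnshred x] ∈ J.rel .elt ↔ [x] ∈ (shredInterp (unshred J)).rel .elt := by
  rw [singleton_mem_shredInterp_elt]
  rcases x with a | t
  · exact iff_of_true a.2 ⟨a, rfl⟩
  · exact iff_of_false (hJ.not_elt_of_tag t.witness_tag) (by simp)

lemma singleton_fromShredUnshred_mem_tag {R : σ.Rel} {h : 2 < σ.ar R}
    {x : (shredInterp (unshred J)).Dom} :
    [fromShredUnshred x] ∈ J.rel (.tag R h) ↔ [x] ∈ (shredInterp (unshred J)).rel (.tag R h) := by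
  rw [singleton_mem_shredInterp_tag]
  rcases x with a | t
  · exact iff_of_false (fun ha => hJ.not_elt_of_tag ha a.2) (by simp)
  · refine ⟨fun ht => ⟨t, hJ.eq_of_tag t.witness_tag ht, rfl⟩, ?_⟩
    rintro ⟨t, rfl, ⟨⟩⟩
    exact t.witness_tag

lemma pair_fromShredUnshred_mem_proj {R : σ.Rel} {h : 2 < σ.ar R} {i : Fin (σ.ar R)}
    {x y : (shredInterp (unshred J)).Dom} :
    [fromShredUnshred x, fromShredUnshred y] ∈ J.rel (.proj R h i) ↔
      [x, y] ∈ (shredInterp (unshred J)).rel (.proj R h i) := by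
  rw [pair_mem_shredInterp_proj]
  constructor
  · intro hxy
    obtain ⟨t, rfl, rfl⟩ := singleton_mem_shredInterp_tag.mp
      ((singleton_fromShredUnshred_mem_tag hJ).mp (hJ.tag_of_proj hxy))
    obtain ⟨b, rfl⟩ := singleton_mem_shredInterp_elt.mp
      ((singleton_fromShredUnshred_mem_elt hJ).mp (hJ.elt_of_proj hxy))
    obtain ⟨a, ha⟩ := t.exists_getElem?_eq i
    have hab := hJ.proj_functional (t.witness_proj ha) hxy
    exact ⟨t, rfl, rfl, a, ha, congrArg _ (Subtype.ext hab).symm⟩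
  · rintro ⟨t, rfl, rfl, a, ha, rfl⟩
    exact t.witness_proj ha

lemma map_fromShredUnshred_mem_low {R : σ.Rel} {h : σ.ar R ≤ 2}
    {l : List (shredInterp (unshred J)).Dom} :
    l.map fromShredUnshred ∈ J.rel (.low R h) ↔ l ∈ (shredInterp (unshred J)).rel (.low R h) := by
  rw [mem_shredInterp_low]
  constructor
  · intro hl
    obtain ⟨l₀, rfl⟩ : ∃ l₀ : List (EltDom J), l = l₀.map .inl :=
      List.exists_eq_map_inl fun x hx =>
        singleton_mem_shredInterp_elt.mp <| (singleton_fromShredUnshred_mem_elt hJ).mp <|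
          hJ.elt_of_low hl (List.mem_map_of_mem hx)
    replace hl := map_fromShredUnshred_map_inl l₀ ▸ hl
    exact ⟨l₀, (mem_unshred_of_le h).mpr ⟨(List.length_map _).symm.trans (J.wf _ _ hl), hl⟩, rfl⟩
  · rintro ⟨l₀, hl₀, rfl⟩
    exact map_fromShredUnshred_map_inl l₀ ▸ ((mem_unshred_of_le h).mp hl₀).2

lemma fromShredUnshred_bijective (hrf : RedundancyFree J) :
    Function.Bijective (fromShredUnshred : (shredInterp (unshred J)).Dom → J.Dom) := by
  refine ⟨Subtype.val_injective.sumElim (HighTuple.witness_injective hJ) fun a t hat =>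
    hJ.not_elt_of_tag t.witness_tag (hat ▸ a.2), fun s => ?_⟩
  rcases hJ.elt_or_tag s with hs | ⟨R, h, hs⟩
  · exact ⟨.inl ⟨s, hs⟩, rfl⟩
  · obtain ⟨t, rfl⟩ := HighTuple.exists_witness_eq hJ hrf hs
    exact ⟨.inr t, rfl⟩

noncomputable def interpIsoShredUnshred (hrf : RedundancyFree J) :
    InterpIso (shredInterp (unshred J)) J :=
  .ofLengthEq (.ofBijective _ (fromShredUnshred_bijective hJ hrf)) fun r l hl => by
    cases r with
    | low R h => exact (map_fromShredUnshred_mem_low hJ).symm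
    | elt =>
      obtain ⟨x, rfl⟩ := List.length_eq_one_iff.mp hl
      exact (singleton_fromShredUnshred_mem_elt hJ).symm
    | tag R h =>
      obtain ⟨x, rfl⟩ := List.length_eq_one_iff.mp hl
      exact (singleton_fromShredUnshred_mem_tag hJ).symm
    | proj R h i =>
      obtain ⟨x, y, rfl⟩ := List.length_eq_two.mp hl
      exact (pair_fromShredUnshred_mem_proj hJ).symm

end shredUnshred

end Shred

/-- the shredding operation is a bijection (up to isomorphism of
interpretations, with the unshredding operation as inverse) from σ-interpretations
to redundancy-free σs-interpretations satisfying `Wellformed(σs)`. -/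
theorem shredding_bijection (σ : Sig) :
    (∀ I : Interp σ, WellFormed (shredInterp I) ∧ RedundancyFree (shredInterp I) ∧
      Nonempty (InterpIso (unshred (shredInterp I)) I)) ∧
    (∀ J : Interp (sSig σ), WellFormed J → RedundancyFree J →
      Nonempty (InterpIso (shredInterp (unshred J)) J)) :=
  ⟨fun I => ⟨wellFormed_shredInterp I, redundancyFree_shredInterp I,
      ⟨(interpIsoUnshredShredInterp I).symm⟩⟩,
    fun _ hJ hrf => ⟨interpIsoShredUnshred hJ hrf⟩⟩
end

section
/- If T is an unraveling of a σs-interpretation J preserving a witness W of a fact F, then T, viewed as an interpretation, still has W as a witness of F, and T is cycle-free except for W: every cycle in the Gaifman graph of T lies entirely within dom(W). In particular, outside dom(W) the Gaifman graph of T is a tree matching the tree structure of T. -/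
/-- A tree-like interpretation: a rooted tree of bags. Each element is
introduced in a unique bag and occurs only there and in children of that bag;
each non-root bag shares exactly one element with its parent, introduced there. -/
structure TreeLike (σ : Sig) : Type 1 where
  Bag : Type
  root : Bag
  par : Bag → Bag
  hroot : par root = root
  reach : ∀ b, ∃ n : ℕ, par^[n] b = root
  Dom : Type
  bdom : Bag → Set Dom
  brel : Bag → σ.Rel → Set (List Dom)
  hwf : ∀ b R l, l ∈ brel b R → l.length = σ.ar R
  hsub : ∀ b R l, l ∈ brel b R → ∀ a ∈ l, a ∈ bdom b
  intro : Dom → Bag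
  hintro : ∀ u, u ∈ bdom (intro u)
  hocc : ∀ u c, u ∈ bdom c → c = intro u ∨ (par c = intro u ∧ c ≠ root)
  hshare : ∀ c, c ≠ root → ∃ u, intro u = par c ∧
    ∀ v, (v ∈ bdom (par c) ∧ v ∈ bdom c) ↔ v = u

/-- A tree-like interpretation, seen as an interpretation (the union of its bags). -/
def TreeLike.toInterp {σ : Sig} (T : TreeLike σ) : Interp σ where
  Dom := T.Dom
  rel := fun R => {l | ∃ b, l ∈ T.brel b R}
  wf := by rintro R l ⟨b, hb⟩; exact T.hwf b R l hb

/-- An unraveling of `J` preserving a witness `w` of the fact `F`: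
the root bag is the fact bag (a copy of the witness), all other bags have
two-element domains, and witness elements are introduced at the root. -/
structure Unraveling (σ : Sig) (J : Interp σ) {nF : ℕ} (F : Conj σ (Fin nF))
    (w : Fin nF → J.Dom) extends TreeLike σ where
  emb : Set.range w → Dom
  hinj : Function.Injective emb
  hrootdom : bdom root = Set.range emb
  hrootrel : ∀ R l, l ∈ brel root R ↔
    ∃ A ∈ F, A.R = R ∧ l = List.ofFn (fun i => emb ⟨w (A.args i), Set.mem_range_self _⟩)
  hsize2 : ∀ b, b ≠ root → ∃ u v, u ≠ v ∧ bdom b = {u, v}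
  hWroot : ∀ x, intro (emb x) = root

/-! The fact bag contains a copy of every atom of `F`, so `W` is still a witness of `F` in `T`.
For cycle-freeness, measure an element by the depth of the bag introducing it and take an element
`x` of maximal depth on a cycle. If `x` is outside `dom(W)`, every edge at `x` lies in a two-element
bag, and an edge to an element that is not deeper must lie in the bag introducing `x` and end in
the unique element this bag shares with its parent. So the two neighbours of `x` on the cycle
coincide, which a cycle does not allow. -/

namespace SimpleGraph

variable {V : Type*} {G : SimpleGraph V}

lemma Walk.IsCycle.exists_adj_adj_of_mem_support {u x : V} {c : G.Walk u u} (hc : c.IsCycle)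
    (hx : x ∈ c.support) :
    ∃ y z, y ≠ z ∧ G.Adj x y ∧ G.Adj x z ∧ y ∈ c.support ∧ z ∈ c.support := by
  classical
  have hc' := hc.rotate hx
  refine ⟨(c.rotate x hx).snd, (c.rotate x hx).penultimate, hc'.snd_ne_penultimate,
    Walk.adj_snd hc'.not_nil, (Walk.adj_penultimate hc'.not_nil).symm, ?_, ?_⟩ <;>
  · rw [← Walk.mem_support_rotate_iff c x hx]
    exact Walk.getVert_mem_support _ _

lemma isAcyclic_induce_of_forall_isCycle {s : Set V}
    (h : ∀ u (c : G.Walk u u), c.IsCycle → ∃ v ∈ c.support, v ∉ s) :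
    (G.induce s).IsAcyclic := by
  intro u c hc
  obtain ⟨v, hv, hvs⟩ :=
    h _ _ (hc.map (f := (Embedding.induce (G := G) s).toHom) Subtype.val_injective)
  rw [Walk.support_map, List.mem_map] at hv
  obtain ⟨v', -, rfl⟩ := hv
  exact hvs v'.2

end SimpleGraph

namespace TreeLike

variable {σ : Sig} (T : TreeLike σ)

open Classical in
noncomputable def depth (b : T.Bag) : ℕ :=
  Nat.find (T.reach b)

lemma depth_eq_zero_iff {b : T.Bag} : T.depth b = 0 ↔ b = T.root := by
  simp [depth, Nat.find_eq_zero]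

lemma depth_par_lt {b : T.Bag} (hb : b ≠ T.root) : T.depth (T.par b) < T.depth b := by
  classical
  obtain ⟨m, hm⟩ := Nat.exists_eq_succ_of_ne_zero (mt T.depth_eq_zero_iff.mp hb)
  have hspec : T.par^[T.depth b] b = T.root := Nat.find_spec (T.reach b)
  rw [hm, Function.iterate_succ_apply] at hspec
  have : T.depth (T.par b) ≤ m := Nat.find_le hspec
  omega

lemma mem_bdom_par_intro_of_depth_le {b : T.Bag} {x y : T.Dom} (hb : b ≠ T.root)
    (hsub : T.bdom b ⊆ {x, y}) (hx : x ∈ T.bdom b) (hy : y ∈ T.bdom b) (hxy : x ≠ y)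
    (hle : T.depth (T.intro y) ≤ T.depth (T.intro x)) :
    y ∈ T.bdom (T.par (T.intro x)) ∧ y ∈ T.bdom (T.intro x) := by
  obtain ⟨s, hs, hshared⟩ := T.hshare b hb
  have intro_eq : ∀ z ∈ T.bdom b, z ≠ s → T.intro z = b := by
    intro z hz hzs
    rcases T.hocc z b hz with h | ⟨h, -⟩
    · exact h.symm
    · exact absurd ((hshared z).mp ⟨h ▸ T.hintro z, hz⟩) hzs
  have hs_mem : s = x ∨ s = y := by simpa using hsub ((hshared s).mpr rfl).2
  rcases hs_mem with rfl | rfl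
  · have := T.depth_par_lt hb
    rw [← hs, ← intro_eq y hy hxy.symm] at this
    omega
  · rw [intro_eq x hx hxy]
    exact (hshared s).mpr rfl

end TreeLike

namespace Unraveling

variable {σ : Sig} {J : Interp σ} {nF : ℕ} {F : Conj σ (Fin nF)} {w : Fin nF → J.Dom}
  (T : Unraveling σ J F w)

lemma satConj_emb :
    satConj T.toTreeLike.toInterp (fun v => T.emb ⟨w v, Set.mem_range_self v⟩) F :=
  fun A hA => ⟨T.root, (T.hrootrel _ _).mpr ⟨A, hA, rfl, rfl⟩⟩

lemma intro_eq_root_iff {v : T.Dom} : T.intro v = T.root ↔ v ∈ Set.range T.emb := by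
  refine ⟨fun h => ?_, fun ⟨x, hx⟩ => hx ▸ T.hWroot x⟩
  rw [← T.hrootdom, ← h]
  exact T.hintro v

lemma mem_bdom_par_intro_of_adj {x y : T.Dom} (hadj : (gaifmanI T.toTreeLike.toInterp).Adj x y)
    (hx : T.intro x ≠ T.root) (hle : T.depth (T.intro y) ≤ T.depth (T.intro x)) :
    y ∈ T.bdom (T.par (T.intro x)) ∧ y ∈ T.bdom (T.intro x) := by
  obtain ⟨hxy, R, l, ⟨b, hb⟩, hxl, hyl⟩ := hadj
  have hxb := T.hsub b R l hb x hxl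
  have hyb := T.hsub b R l hb y hyl
  have hbroot : b ≠ T.root := by
    rintro rfl
    exact hx (T.intro_eq_root_iff.mpr (T.hrootdom ▸ hxb))
  refine T.toTreeLike.mem_bdom_par_intro_of_depth_le hbroot ?_ hxb hyb hxy hle
  obtain ⟨u, v, -, hdom⟩ := T.hsize2 b hbroot
  rw [hdom] at hxb hyb ⊢
  simp only [Set.mem_insert_iff, Set.mem_singleton_iff] at hxb hyb
  rcases hxb with rfl | rfl <;> rcases hyb with rfl | rfl <;>
    first | exact (hxy rfl).elim | simp [Set.pair_comm]

lemma mem_range_emb_of_isCycle {a v : T.Dom} {c : (gaifmanI T.toTreeLike.toInterp).Walk a a}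
    (hc : c.IsCycle) (hv : v ∈ c.support) : v ∈ Set.range T.emb := by
  classical
  obtain ⟨x, hx, hmax⟩ := c.support.toFinset.exists_max_image (fun v => T.depth (T.intro v))
    ⟨a, List.mem_toFinset.mpr c.start_mem_support⟩
  simp only [List.mem_toFinset] at hx hmax
  by_contra hvW
  have hxroot : T.intro x ≠ T.root := by
    intro h
    have := hmax v hv
    rw [h, T.depth_eq_zero_iff.mpr rfl, Nat.le_zero, T.depth_eq_zero_iff, T.intro_eq_root_iff]
      at this
    exact hvW this
  obtain ⟨y, z, hyz, hy, hz, hyc, hzc⟩ := hc.exists_adj_adj_of_mem_support hx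
  obtain ⟨s, -, hshared⟩ := T.hshare _ hxroot
  exact hyz (((hshared y).mp (T.mem_bdom_par_intro_of_adj hy hxroot (hmax y hyc))).trans
    ((hshared z).mp (T.mem_bdom_par_intro_of_adj hz hxroot (hmax z hzc))).symm)

end Unraveling

theorem unraveling_cycle_free_general (σ : Sig) (J : Interp σ) {nF : ℕ}
    (F : Conj σ (Fin nF)) (w : Fin nF → J.Dom)
    (T : Unraveling σ J F w) :
    satConj T.toTreeLike.toInterp (fun v => T.emb ⟨w v, Set.mem_range_self v⟩) F ∧
    (∀ (a : T.Dom) (p : (gaifmanI T.toTreeLike.toInterp).Walk a a), p.IsCycle →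
      ∀ v ∈ p.support, v ∈ Set.range T.emb) ∧
    ((gaifmanI T.toTreeLike.toInterp).induce {v : T.Dom | v ∉ Set.range T.emb}).IsAcyclic :=
  ⟨T.satConj_emb, fun _ _ hp _ hv => T.mem_range_emb_of_isCycle hp hv,
    SimpleGraph.isAcyclic_induce_of_forall_isCycle fun _ c hc =>
      ⟨_, c.start_mem_support,
        not_not.mpr (T.mem_range_emb_of_isCycle hc c.start_mem_support)⟩⟩

/-- if `T` is an unraveling of `J` preserving a witness `w` of a fact
`F`, then `W` is still a witness of `F` in `T`, and `T` is cycle-free except for `W`: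
every cycle of the Gaifman graph of `T` lies within `dom(W)`. In particular, the
Gaifman graph of `T` is acyclic outside `dom(W)`. -/
theorem unraveling_cycle_free (σ : Sig) (J : Interp σ) {nF : ℕ}
    (F : Conj σ (Fin nF)) (w : Fin nF → J.Dom) (hw : satConj J w F)
    (T : Unraveling σ J F w) :
    satConj T.toTreeLike.toInterp (fun v => T.emb ⟨w v, Set.mem_range_self v⟩) F ∧
    (∀ (a : T.Dom) (p : (gaifmanI T.toTreeLike.toInterp).Walk a a), p.IsCycle →
      ∀ v ∈ p.support, v ∈ Set.range T.emb) ∧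
    ((gaifmanI T.toTreeLike.toInterp).induce {v : T.Dom | v ∉ Set.range T.emb}).IsAcyclic :=
  unraveling_cycle_free_general σ J F w T
end
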